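/- Per-pair error bound for ELRT. Let i ∈ Fin N be the true demand model and consider a pricing process under model i following the ELRT policy. Fix h ≠ i, set a_h = min over k ∈ Fin N of I(q i k ‖ q h k) > 0, let m_h and M_h be the minimum and maximum over k ∈ Fin N and y ∈ {0,1} of log(f i k y / f h k y), and set C_h = (M_h − m_h)²/(2 a_h²). Then for every t ≥ 1, P(L_{i,h}(t) < 0) ≤ exp(−2 a_h² t/(M_h − m_h)²), and consequently E[#{t ≥ 1 : L_{i,h}(t) < 0}] ≤ C_h. -/

import Mathlib

open MeasureTheory ProbabilityTheory Finset Real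

noncomputable section

/-- Probability of outcome `y ∈ {0,1}` under a Bernoulli distribution with success
probability `p`:  `f p y = p^y (1-p)^(1-y)`. -/
def bern (p : ℝ) (y : ℕ) : ℝ := p ^ y * (1 - p) ^ (1 - y)

/-- The Kullback–Leibler divergence between Bernoulli(α) and Bernoulli(β). -/
def klBern (α β : ℝ) : ℝ :=
  α * Real.log (α / β) + (1 - α) * Real.log ((1 - α) / (1 - β))

variable {Ω : Type*} {mΩ : MeasurableSpace Ω} {N : ℕ}

/-- The pairwise (unnormalized) log-likelihood statistic
`L_{i,h}(t) = ∑_{j=1}^t log (f_i^{a_j}(y_j) / f_h^{a_j}(y_j))`, with `L_{i,h}(0) = 0`. -/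
def LLRN (q : Fin N → Fin N → ℝ) (a : ℕ → Ω → Fin N) (y : ℕ → Ω → ℕ)
    (i h : Fin N) (t : ℕ) (ω : Ω) : ℝ :=
  ∑ j ∈ Finset.Icc 1 t,
    Real.log (bern (q i (a j ω)) (y j ω) / bern (q h (a j ω)) (y j ω))

/-- An `N`-demand-model pricing process under true demand model `i`: actions `a t` are
`ℱ (t-1)`-measurable, outcomes `y t ∈ {0,1}` are `ℱ t`-measurable, and the conditional
probability of a successful sale at time `t` given the past is `q i (a t)` a.s. -/
structure IsPricingProcessN (μ : Measure Ω) (ℱ : Filtration ℕ mΩ)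
    (q : Fin N → Fin N → ℝ) (i : Fin N) (a : ℕ → Ω → Fin N) (y : ℕ → Ω → ℕ) : Prop where
  meas_a : ∀ t, 1 ≤ t → Measurable[ℱ (t - 1)] (a t)
  meas_y : ∀ t, 1 ≤ t → Measurable[ℱ t] (y t)
  y_range : ∀ t, 1 ≤ t → ∀ ω, y t ω = 0 ∨ y t ω = 1
  sale_prob : ∀ t, 1 ≤ t →
    μ[Set.indicator {ω | y t ω = 1} (fun _ => (1 : ℝ)) | ℱ (t - 1)]
      =ᵐ[μ] fun ω => q i (a t ω)

/-- The ELRT policy: for `t ≥ 1`, `a (t+1) = k` whenever `k` is an index with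
`L_{k,j}(t) > 0` for every `j ≠ k` (an arbitrary choice is made if no such `k` exists). -/
def IsELRT (q : Fin N → Fin N → ℝ) (a : ℕ → Ω → Fin N) (y : ℕ → Ω → ℕ) : Prop :=
  ∀ t, 1 ≤ t → ∀ ω, ∀ k : Fin N,
    (∀ j, j ≠ k → 0 < LLRN q a y k j t ω) → a (t + 1) ω = k

open scoped ENNReal

/-!
The increments of `L_{i,h}` are `X_t = log (f_i / f_h)` at the offered arm and the observed sale.
Under model `i` their conditional mean given the past is `I(q i (a_t) ‖ q h (a_t)) ≥ a_h`, and they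
lie in `[m_h, M_h]`. Hoeffding's lemma, applied conditionally, gives
`E[exp (-λ X_t) | F_{t-1}] ≤ exp (-c)` with `λ = 4 a_h/(M_h - m_h)²` and `c = 2 a_h²/(M_h - m_h)²`,
so `exp (-λ L_{i,h}(t))` has expectation at most `exp (-c t)` and Markov's inequality bounds
`P(L_{i,h}(t) < 0)`. Summing, the expected number of errors is at most
`e^{-c}/(1 - e^{-c}) ≤ 1/c = C_h`.
-/

open InformationTheory
open scoped NNReal

def logLikRatio (α β : ℝ) (y : ℕ) : ℝ := Real.log (bern α y / bern β y)

lemma klBern_eq_klFun (α : ℝ) {β : ℝ} (hβ0 : β ≠ 0) (hβ1 : 1 - β ≠ 0) :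
    klBern α β = β * klFun (α / β) + (1 - β) * klFun ((1 - α) / (1 - β)) := by
  simp only [klBern, klFun_apply]
  field_simp
  ring

lemma klBern_pos {α β : ℝ} (hα : α ∈ Set.Icc (0 : ℝ) 1) (hβ : β ∈ Set.Ioo (0 : ℝ) 1)
    (hne : α ≠ β) : 0 < klBern α β := by
  obtain ⟨hα0, hα1⟩ := hα
  obtain ⟨hβ0, hβ1⟩ := hβ
  rw [klBern_eq_klFun α hβ0.ne' (sub_ne_zero.2 hβ1.ne')]
  have h1 : 0 < klFun (α / β) :=
    (klFun_nonneg (by positivity)).lt_of_ne' fun h =>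
      hne ((div_eq_one_iff_eq hβ0.ne').1 ((klFun_eq_zero_iff (by positivity)).1 h))
  have h2 : 0 ≤ klFun ((1 - α) / (1 - β)) := klFun_nonneg (div_nonneg (by linarith) (by linarith))
  have h3 : 0 ≤ 1 - β := by linarith
  positivity

lemma klBern_eq_mean_logLikRatio (α β : ℝ) :
    klBern α β = α * logLikRatio α β 1 + (1 - α) * logLikRatio α β 0 := by
  simp [klBern, logLikRatio, bern]

lemma logLikRatio_one_ne_logLikRatio_zero {α β : ℝ} (hα : α ∈ Set.Ioo (0 : ℝ) 1)
    (hβ : β ∈ Set.Ioo (0 : ℝ) 1) (hne : α ≠ β) : logLikRatio α β 1 ≠ logLikRatio α β 0 := by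
  obtain ⟨hα0, hα1⟩ := hα
  obtain ⟨hβ0, hβ1⟩ := hβ
  simp only [logLikRatio, bern, pow_one, pow_zero, mul_one, one_mul, tsub_zero, tsub_self]
  intro h
  have := Real.log_injOn_pos (Set.mem_Ioi.2 (by positivity))
    (Set.mem_Ioi.2 (div_pos (by linarith) (by linarith))) h
  rw [div_eq_div_iff hβ0.ne' (by linarith)] at this
  exact hne (by linarith)

lemma two_point_mgf_le {p : ℝ} (hp : p ∈ Set.Icc (0 : ℝ) 1) (u v s : ℝ) :
    p * exp (s * u) + (1 - p) * exp (s * v)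
      ≤ exp (s * (p * u + (1 - p) * v) + s ^ 2 * (u - v) ^ 2 / 8) := by
  obtain ⟨hp0, hp1⟩ := hp
  -- Hoeffding's lemma for the law `p δ_u + (1 - p) δ_v`, realised on `Bool`.
  set ν : Measure Bool :=
    ENNReal.ofReal p • Measure.dirac true + ENNReal.ofReal (1 - p) • Measure.dirac false
  have : IsProbabilityMeasure ν := ⟨by
    simp only [ν, Measure.add_apply, Measure.smul_apply, measure_univ, smul_eq_mul, mul_one]
    rw [← ENNReal.ofReal_add hp0 (by linarith)]; simp⟩
  have hint (f : Bool → ℝ) : ∫ b, f b ∂ν = p * f true + (1 - p) * f false := by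
    rw [integral_add_measure (Integrable.of_finite.smul_measure ENNReal.ofReal_ne_top)
      (Integrable.of_finite.smul_measure ENNReal.ofReal_ne_top), integral_smul_measure,
      integral_smul_measure, integral_dirac, integral_dirac]
    simp [ENNReal.toReal_ofReal hp0, ENNReal.toReal_ofReal (sub_nonneg.2 hp1)]
  set X : Bool → ℝ := fun b => if b then u else v
  have hX : ∀ᵐ b ∂ν, X b ∈ Set.Icc (min u v) (max u v) :=
    ae_of_all _ fun b => by cases b <;> simp [X]
  have hoeff := (hasSubgaussianMGF_of_mem_Icc (Measurable.of_discrete).aemeasurable hX).mgf_le s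
  simp only [mgf, hint, X, if_true, Bool.false_eq_true, if_false] at hoeff
  have hwidth : (((‖max u v - min u v‖₊ / 2) ^ 2 : ℝ≥0) : ℝ) = (u - v) ^ 2 / 4 := by
    push_cast
    simp only [Real.norm_eq_abs, max_sub_min_eq_abs, div_pow, sq_abs]
    ring
  rw [hwidth] at hoeff
  set m := p * u + (1 - p) * v
  calc p * exp (s * u) + (1 - p) * exp (s * v)
      = exp (s * m) * (p * exp (s * (u - m)) + (1 - p) * exp (s * (v - m))) := by
        simp only [mul_sub, exp_sub]
        field_simp
    _ ≤ exp (s * m) * exp ((u - v) ^ 2 / 4 * s ^ 2 / 2) := by gcongr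
    _ = exp (s * m + s ^ 2 * (u - v) ^ 2 / 8) := by
        rw [← exp_add]
        ring_nf

lemma two_point_exp_neg_mul_le_of_le_mean {p u v m M A : ℝ} (hp : p ∈ Set.Icc (0 : ℝ) 1)
    (hu : u ∈ Set.Icc m M) (hv : v ∈ Set.Icc m M) (hA : 0 ≤ A) (hmean : A ≤ p * u + (1 - p) * v) :
    p * exp (-(4 * A / (M - m) ^ 2 * u)) + (1 - p) * exp (-(4 * A / (M - m) ^ 2 * v))
      ≤ exp (-(2 * A ^ 2 / (M - m) ^ 2)) := by
  -- `s` minimises the exponent `-s A + s² (M - m)² / 8` of the Hoeffding bound.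
  set s := 4 * A / (M - m) ^ 2
  have hs : 0 ≤ s := by positivity
  have hwidth : (u - v) ^ 2 ≤ (M - m) ^ 2 :=
    sq_le_sq' (by linarith [hu.1, hv.2]) (by linarith [hu.2, hv.1])
  have hexp : -s * (p * u + (1 - p) * v) + (-s) ^ 2 * (u - v) ^ 2 / 8
      ≤ -s * A + s ^ 2 * (M - m) ^ 2 / 8 := by
    have := mul_le_mul_of_nonneg_left hmean hs
    have := mul_le_mul_of_nonneg_left hwidth (sq_nonneg s)
    nlinarith
  have hopt : -s * A + s ^ 2 * (M - m) ^ 2 / 8 = -(2 * A ^ 2 / (M - m) ^ 2) := by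
    rcases eq_or_ne ((M - m) ^ 2) 0 with h | h
    · simp [s, h]
    · simp only [s]; field_simp; ring
  simp only [← neg_mul]
  exact (two_point_mgf_le hp u v (-s)).trans (exp_le_exp.2 (hexp.trans hopt.le))

lemma tsum_ofReal_exp_neg_pow_succ_le {c : ℝ} (hc : 0 < c) :
    ∑' t : ℕ, ENNReal.ofReal (exp (-c) ^ (t + 1)) ≤ ENNReal.ofReal c⁻¹ := by
  have he₀ : 0 < exp (-c) := exp_pos _
  have he₁ : exp (-c) < 1 := exp_lt_one_iff.2 (neg_lt_zero.2 hc)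
  simp_rw [ENNReal.ofReal_pow he₀.le]
  rw [ENNReal.tsum_geometric_add_one, ← ENNReal.ofReal_one, ← ENNReal.ofReal_sub _ he₀.le,
    ← ENNReal.ofReal_inv_of_pos (sub_pos.2 he₁), ← ENNReal.ofReal_mul he₀.le]
  refine ENNReal.ofReal_le_ofReal ?_
  rw [← div_eq_mul_inv, div_le_iff₀ (sub_pos.2 he₁), ← div_eq_inv_mul, le_div_iff₀ hc]
  have hprod : exp (-c) * exp c = 1 := by rw [← exp_add, neg_add_cancel, exp_zero]
  nlinarith [mul_le_mul_of_nonneg_left (add_one_le_exp c) he₀.le]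

lemma lintegral_tsum_indicator_one {μ : Measure Ω} {s : ℕ → Set Ω}
    (hs : ∀ t, MeasurableSet (s t)) :
    ∫⁻ ω, ∑' t, (s t).indicator (fun _ => (1 : ℝ≥0∞)) ω ∂μ = ∑' t, μ (s t) := by
  rw [lintegral_tsum fun t => (measurable_const.indicator (hs t)).aemeasurable]
  simp_rw [lintegral_indicator_const (hs _), one_mul]

namespace IsPricingProcessN

variable {μ : Measure Ω} {ℱ : Filtration ℕ mΩ} {q : Fin N → Fin N → ℝ} {i : Fin N}
  {a : ℕ → Ω → Fin N} {y : ℕ → Ω → ℕ}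

lemma measurable_comp (hp : IsPricingProcessN μ ℱ q i a y) (g : Fin N → ℕ → ℝ) {t : ℕ}
    (ht : 1 ≤ t) : Measurable[ℱ t] fun ω => g (a t ω) (y t ω) :=
  (measurable_of_countable (Function.uncurry g)).comp
    (((hp.meas_a t ht).mono (ℱ.mono (Nat.sub_le t 1)) le_rfl).prodMk (hp.meas_y t ht))

lemma measurable_sum_comp (hp : IsPricingProcessN μ ℱ q i a y) (g : Fin N → ℕ → ℝ) (t : ℕ) :
    Measurable[ℱ t] fun ω => ∑ j ∈ Icc 1 t, g (a j ω) (y j ω) :=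
  Finset.measurable_sum _ fun _ hj =>
    (hp.measurable_comp g (mem_Icc.1 hj).1).mono (ℱ.mono (mem_Icc.1 hj).2) le_rfl

lemma norm_comp_le (hp : IsPricingProcessN μ ℱ q i a y) (g : Fin N → ℕ → ℝ) {t : ℕ}
    (ht : 1 ≤ t) (ω : Ω) : ‖g (a t ω) (y t ω)‖ ≤ ∑ k, (‖g k 0‖ + ‖g k 1‖) := by
  have hk : ‖g (a t ω) (y t ω)‖ ≤ ‖g (a t ω) 0‖ + ‖g (a t ω) 1‖ := by
    rcases hp.y_range t ht ω with h | h <;> simp [h]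
  exact hk.trans (single_le_sum (f := fun k => ‖g k 0‖ + ‖g k 1‖)
    (fun _ _ => by positivity) (mem_univ _))

lemma integrable_comp [IsFiniteMeasure μ] (hp : IsPricingProcessN μ ℱ q i a y)
    (g : Fin N → ℕ → ℝ) {t : ℕ} (ht : 1 ≤ t) : Integrable (fun ω => g (a t ω) (y t ω)) μ :=
  .of_bound ((hp.measurable_comp g ht).mono (ℱ.le t) le_rfl).aestronglyMeasurable _
    (ae_of_all _ (hp.norm_comp_le g ht))

lemma condExp_comp_ae_eq [IsFiniteMeasure μ] (hp : IsPricingProcessN μ ℱ q i a y)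
    (g : Fin N → ℕ → ℝ) (t : ℕ) :
    μ[fun ω => g (a (t + 1) ω) (y (t + 1) ω) | ℱ t] =ᵐ[μ] fun ω =>
      q i (a (t + 1) ω) * g (a (t + 1) ω) 1 + (1 - q i (a (t + 1) ω)) * g (a (t + 1) ω) 0 := by
  have ht : 1 ≤ t + 1 := le_add_self
  set sale := {ω | y (t + 1) ω = 1}.indicator fun _ => (1 : ℝ)
  set g₀ := fun ω => g (a (t + 1) ω) 0
  set δ := fun ω => g (a (t + 1) ω) 1 - g (a (t + 1) ω) 0
  have hdecomp : (fun ω => g (a (t + 1) ω) (y (t + 1) ω)) = g₀ + δ * sale := by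
    funext ω
    rcases hp.y_range _ ht ω with h | h <;> simp [g₀, δ, sale, h]
  have ha : Measurable[ℱ t] (a (t + 1)) := hp.meas_a _ ht
  have hg₀m : StronglyMeasurable[ℱ t] g₀ :=
    ((measurable_of_countable fun k => g k 0).comp ha).stronglyMeasurable
  have hδm : StronglyMeasurable[ℱ t] δ :=
    ((measurable_of_countable fun k => g k 1 - g k 0).comp ha).stronglyMeasurable
  have hg₀ : Integrable g₀ μ := hp.integrable_comp (fun k _ => g k 0) ht
  have hsale : Integrable sale μ :=
    (integrable_const 1).indicator (ℱ.le _ _ (hp.meas_y _ ht (measurableSet_singleton 1)))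
  have hδsale : Integrable (δ * sale) μ := by
    rw [show δ * sale = (fun ω => g (a (t + 1) ω) (y (t + 1) ω)) - g₀ by rw [hdecomp]; ring]
    exact (hp.integrable_comp g ht).sub hg₀
  have hprob := hp.sale_prob (t + 1) ht
  rw [Nat.add_sub_cancel] at hprob
  filter_upwards [condExp_add hg₀ hδsale (ℱ t),
    condExp_mul_of_stronglyMeasurable_left hδm hδsale hsale, hprob] with ω hadd hmul hq
  rw [hdecomp, hadd, Pi.add_apply, hmul, Pi.mul_apply, hq,
    condExp_of_stronglyMeasurable (ℱ.le t) hg₀m hg₀]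
  simp only [g₀, δ]
  ring

lemma integral_mul_comp_le [IsFiniteMeasure μ] (hp : IsPricingProcessN μ ℱ q i a y)
    (g : Fin N → ℕ → ℝ) {r : ℝ} (hr : ∀ k, q i k * g k 1 + (1 - q i k) * g k 0 ≤ r) {t : ℕ}
    {W : Ω → ℝ} (hWm : StronglyMeasurable[ℱ t] W) (hW : Integrable W μ) (hW₀ : 0 ≤ W) :
    ∫ ω, W ω * g (a (t + 1) ω) (y (t + 1) ω) ∂μ ≤ r * ∫ ω, W ω ∂μ := by
  have hG := hp.integrable_comp g (le_add_self : 1 ≤ t + 1)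
  have hWG : Integrable (W * fun ω => g (a (t + 1) ω) (y (t + 1) ω)) μ :=
    hW.mul_bdd hG.aestronglyMeasurable (ae_of_all _ (hp.norm_comp_le g le_add_self))
  have hpull := condExp_mul_of_stronglyMeasurable_left hWm hWG hG
  calc ∫ ω, W ω * g (a (t + 1) ω) (y (t + 1) ω) ∂μ
      = ∫ ω, (W * μ[fun ω => g (a (t + 1) ω) (y (t + 1) ω) | ℱ t]) ω ∂μ :=
        (integral_condExp (ℱ.le t)).symm.trans (integral_congr_ae hpull)
    _ ≤ ∫ ω, W ω * r ∂μ := by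
        refine integral_mono_ae (integrable_condExp.congr hpull) (hW.mul_const r) ?_
        filter_upwards [hp.condExp_comp_ae_eq g t] with ω hω
        rw [Pi.mul_apply, hω]
        exact mul_le_mul_of_nonneg_left (hr _) (hW₀ ω)
    _ = r * ∫ ω, W ω ∂μ := by rw [integral_mul_const, mul_comm]

lemma integrable_exp_sum_comp [IsFiniteMeasure μ] (hp : IsPricingProcessN μ ℱ q i a y)
    (φ : Fin N → ℕ → ℝ) (t : ℕ) :
    Integrable (fun ω => exp (∑ j ∈ Icc 1 t, φ (a j ω) (y j ω))) μ := by
  induction t with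
  | zero => simp
  | succ t ih =>
    simp_rw [sum_Icc_succ_top (le_add_self : 1 ≤ t + 1), exp_add]
    exact ih.mul_bdd
      (hp.integrable_comp (fun k y => exp (φ k y)) le_add_self).aestronglyMeasurable
      (ae_of_all _ (hp.norm_comp_le (fun k y => exp (φ k y)) le_add_self))

lemma integral_exp_sum_comp_le_pow [IsProbabilityMeasure μ] (hp : IsPricingProcessN μ ℱ q i a y)
    (φ : Fin N → ℕ → ℝ) {r : ℝ}
    (hr : ∀ k, q i k * exp (φ k 1) + (1 - q i k) * exp (φ k 0) ≤ r) (t : ℕ) :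
    ∫ ω, exp (∑ j ∈ Icc 1 t, φ (a j ω) (y j ω)) ∂μ ≤ r ^ t := by
  induction t with
  | zero => simp
  | succ t ih =>
    have hstep : ∫ ω, exp (∑ j ∈ Icc 1 (t + 1), φ (a j ω) (y j ω)) ∂μ
        ≤ r * ∫ ω, exp (∑ j ∈ Icc 1 t, φ (a j ω) (y j ω)) ∂μ := by
      simp_rw [sum_Icc_succ_top (le_add_self : 1 ≤ t + 1), exp_add]
      exact hp.integral_mul_comp_le (fun k y => exp (φ k y)) hr
        (Real.measurable_exp.comp (hp.measurable_sum_comp φ t)).stronglyMeasurable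
        (hp.integrable_exp_sum_comp φ t) fun ω => (exp_pos _).le
    have hr₀ : 0 < r := pos_of_mul_pos_left
      ((integral_exp_pos (hp.integrable_exp_sum_comp φ (t + 1))).trans_le hstep)
      (integral_exp_pos (hp.integrable_exp_sum_comp φ t)).le
    calc _ ≤ r * ∫ ω, exp (∑ j ∈ Icc 1 t, φ (a j ω) (y j ω)) ∂μ := hstep
      _ ≤ r * r ^ t := by gcongr
      _ = r ^ (t + 1) := (pow_succ' r t).symm

lemma measure_sum_comp_lt_zero_le [IsProbabilityMeasure μ] (hp : IsPricingProcessN μ ℱ q i a y)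
    (g : Fin N → ℕ → ℝ) {s r : ℝ} (hs : 0 ≤ s)
    (hr : ∀ k, q i k * exp (-(s * g k 1)) + (1 - q i k) * exp (-(s * g k 0)) ≤ r) (t : ℕ) :
    μ {ω | ∑ j ∈ Icc 1 t, g (a j ω) (y j ω) < 0} ≤ ENNReal.ofReal (r ^ t) := by
  have hsub : {ω | ∑ j ∈ Icc 1 t, g (a j ω) (y j ω) < 0}
      ⊆ {ω | 0 ≤ ∑ j ∈ Icc 1 t, -(s * g (a j ω) (y j ω))} := fun ω hω => by
    simp only [Set.mem_ofPred_eq, sum_neg_distrib, ← mul_sum, neg_nonneg] at hω ⊢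
    exact mul_nonpos_of_nonneg_of_nonpos hs hω.le
  have hint := hp.integrable_exp_sum_comp (fun k y => -(s * g k y)) t
  calc μ {ω | ∑ j ∈ Icc 1 t, g (a j ω) (y j ω) < 0}
      ≤ μ {ω | 0 ≤ ∑ j ∈ Icc 1 t, -(s * g (a j ω) (y j ω))} := measure_mono hsub
    _ = ENNReal.ofReal (μ.real {ω | 0 ≤ ∑ j ∈ Icc 1 t, -(s * g (a j ω) (y j ω))}) :=
        (ofReal_measureReal).symm
    _ ≤ ENNReal.ofReal (r ^ t) := by
        gcongr
        refine (measure_ge_le_exp_mul_mgf 0 zero_le_one (by simpa using hint)).trans ?_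
        simpa [mgf] using hp.integral_exp_sum_comp_le_pow (fun k y => -(s * g k y)) hr t

end IsPricingProcessN

theorem elrt_per_pair_error_bound_general
    (μ : Measure Ω) [IsProbabilityMeasure μ] (ℱ : Filtration ℕ mΩ)
    (q : Fin (N + 2) → Fin (N + 2) → ℝ)
    (hq : ∀ i k, q i k ∈ Set.Ioo (0 : ℝ) 1)
    (hni : ∀ j h, j ≠ h → ∀ k, q j k ≠ q h k)
    (i : Fin (N + 2)) (a : ℕ → Ω → Fin (N + 2)) (y : ℕ → Ω → ℕ)
    (hproc : IsPricingProcessN μ ℱ q i a y)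
    (h : Fin (N + 2)) (hhi : h ≠ i)
    (aH mH MH CH : ℝ)
    (haH : aH = Finset.univ.inf' ⟨0, Finset.mem_univ 0⟩
      (fun k : Fin (N + 2) => klBern (q i k) (q h k)))
    (hmH : mH = Finset.univ.inf' ⟨(0, 0), Finset.mem_univ _⟩
      (fun p : Fin (N + 2) × Fin 2 =>
        Real.log (bern (q i p.1) (p.2 : ℕ) / bern (q h p.1) (p.2 : ℕ))))
    (hMH : MH = Finset.univ.sup' ⟨(0, 0), Finset.mem_univ _⟩
      (fun p : Fin (N + 2) × Fin 2 =>
        Real.log (bern (q i p.1) (p.2 : ℕ) / bern (q h p.1) (p.2 : ℕ))))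
    (hCH : CH = (MH - mH) ^ 2 / (2 * aH ^ 2)) :
    0 < aH ∧
      (∀ t : ℕ, 1 ≤ t →
        μ {ω | LLRN q a y i h t ω < 0}
          ≤ ENNReal.ofReal (Real.exp (-2 * aH ^ 2 * t / (MH - mH) ^ 2))) ∧
      (∫⁻ ω, ∑' t : ℕ, {ω' | LLRN q a y i h (t + 1) ω' < 0}.indicator
          (fun _ => (1 : ℝ≥0∞)) ω ∂μ) ≤ ENNReal.ofReal CH := by
  set g : Fin (N + 2) → ℕ → ℝ := fun k => logLikRatio (q i k) (q h k)
  have hne : ∀ k, q i k ≠ q h k := hni i h hhi.symm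
  have hKL : ∀ k, aH ≤ klBern (q i k) (q h k) := fun k => haH ▸ inf'_le _ (mem_univ k)
  have haH₀ : 0 < aH := haH ▸ (lt_inf'_iff _).2 fun k _ =>
    klBern_pos (Set.Ioo_subset_Icc_self (hq i k)) (hq h k) (hne k)
  have hg : ∀ k (b : Fin 2), g k b ∈ Set.Icc mH MH := fun k b =>
    ⟨hmH ▸ inf'_le _ (mem_univ (k, b)),
      hMH ▸ le_sup' (fun p : Fin (N + 2) × Fin 2 => g p.1 p.2) (mem_univ (k, b))⟩
  have hwidth : mH < MH := by
    have hsep := logLikRatio_one_ne_logLikRatio_zero (hq i 0) (hq h 0) (hne 0)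
    have h1 := hg 0 1
    have h0 := hg 0 0
    simp only [Fin.val_one, Fin.val_zero] at h1 h0
    by_contra! hle
    exact hsep (by linarith [h1.1, h1.2, h0.1, h0.2] : g 0 1 = g 0 0)
  set c := 2 * aH ^ 2 / (MH - mH) ^ 2 with hc_def
  have hc : 0 < c := by have := sub_pos.2 hwidth; positivity
  have htail : ∀ t, μ {ω | LLRN q a y i h t ω < 0} ≤ ENNReal.ofReal (exp (-c) ^ t) :=
    hproc.measure_sum_comp_lt_zero_le g (by positivity) fun k =>
      two_point_exp_neg_mul_le_of_le_mean (Set.Ioo_subset_Icc_self (hq i k)) (hg k 1) (hg k 0)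
        haH₀.le (klBern_eq_mean_logLikRatio (q i k) (q h k) ▸ hKL k)
  refine ⟨haH₀, fun t _ => ?_, ?_⟩
  · convert htail t using 2
    rw [← exp_nat_mul, hc_def]
    ring_nf
  · have hmeas : ∀ t, MeasurableSet {ω | LLRN q a y i h t ω < 0} := fun t =>
      measurableSet_lt ((hproc.measurable_sum_comp g t).mono (ℱ.le t) le_rfl) measurable_const
    rw [lintegral_tsum_indicator_one fun t => hmeas (t + 1), hCH, ← inv_div]
    exact (ENNReal.tsum_le_tsum fun t => htail _).trans (tsum_ofReal_exp_neg_pow_succ_le hc)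

/-- **Per-pair error bound for ELRT.** Here there are `N + 2 ≥ 2` demand models. If the true
demand model is `i` and `h ≠ i`, then with `a_h = min_k I(q i k ‖ q h k) > 0` one has
`P(L_{i,h}(t) < 0) ≤ exp(−2 a_h² t/(M_h − m_h)²)` for every `t ≥ 1`, and consequently the
expected number of times `t ≥ 1` at which `L_{i,h}(t) < 0` is at most
`C_h = (M_h − m_h)²/(2 a_h²)`. -/
theorem elrt_per_pair_error_bound
    (μ : Measure Ω) [IsProbabilityMeasure μ] (ℱ : Filtration ℕ mΩ)
    (q : Fin (N + 2) → Fin (N + 2) → ℝ)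
    (hq : ∀ i k, q i k ∈ Set.Ioo (0 : ℝ) 1)
    (hni : ∀ j h, j ≠ h → ∀ k, q j k ≠ q h k)
    (i : Fin (N + 2)) (a : ℕ → Ω → Fin (N + 2)) (y : ℕ → Ω → ℕ)
    (hproc : IsPricingProcessN μ ℱ q i a y)
    (hpol : IsELRT q a y)
    (h : Fin (N + 2)) (hhi : h ≠ i)
    (aH mH MH CH : ℝ)
    (haH : aH = Finset.univ.inf' ⟨0, Finset.mem_univ 0⟩
      (fun k : Fin (N + 2) => klBern (q i k) (q h k)))
    (hmH : mH = Finset.univ.inf' ⟨(0, 0), Finset.mem_univ _⟩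
      (fun p : Fin (N + 2) × Fin 2 =>
        Real.log (bern (q i p.1) (p.2 : ℕ) / bern (q h p.1) (p.2 : ℕ))))
    (hMH : MH = Finset.univ.sup' ⟨(0, 0), Finset.mem_univ _⟩
      (fun p : Fin (N + 2) × Fin 2 =>
        Real.log (bern (q i p.1) (p.2 : ℕ) / bern (q h p.1) (p.2 : ℕ))))
    (hCH : CH = (MH - mH) ^ 2 / (2 * aH ^ 2)) :
    0 < aH ∧
      (∀ t : ℕ, 1 ≤ t →
        μ {ω | LLRN q a y i h t ω < 0}
          ≤ ENNReal.ofReal (Real.exp (-2 * aH ^ 2 * t / (MH - mH) ^ 2))) ∧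
      (∫⁻ ω, ∑' t : ℕ, {ω' | LLRN q a y i h (t + 1) ω' < 0}.indicator
          (fun _ => (1 : ℝ≥0∞)) ω ∂μ) ≤ ENNReal.ofReal CH :=
  elrt_per_pair_error_bound_general μ ℱ q hq hni i a y hproc h hhi aH mH MH CH haH hmH hMH hCH
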